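/- The Group OWL penalty J_λ is a norm on ℝ^{d×q} when λ₁ > 0 and λ₁ ≥ λ₂ ≥ … ≥ λ_d ≥ 0: it is nonnegative, positively homogeneous, satisfies the triangle inequality, and J_λ(B) = 0 iff B = 0. -/
import Mathlib


open scoped BigOperators

/-- `xᵀθ ∈ ℝ^q`: the row vector of inner products of `x ∈ ℝⁿ` with the columns of
`θ ∈ ℝ^{n×q}`. -/
noncomputable def rowDot {n q : ℕ} (x : Fin n → ℝ) (θ : Matrix (Fin n) (Fin q) ℝ) :
    Fin q → ℝ :=
  fun j => ∑ i, x i * θ i j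

/-- Euclidean norm of a vector. -/
noncomputable def vnorm {m : ℕ} (v : Fin m → ℝ) : ℝ :=
  Real.sqrt (∑ j, v j ^ 2)

/-- Frobenius norm of a matrix. -/
noncomputable def frob {n q : ℕ} (θ : Matrix (Fin n) (Fin q) ℝ) : ℝ :=
  Real.sqrt (∑ i, ∑ j, θ i j ^ 2)
/-- The non-increasing rearrangement of a vector `v : Fin d → ℝ`:
`sortDesc v 0 ≥ sortDesc v 1 ≥ …`. -/
noncomputable def sortDesc {d : ℕ} (v : Fin d → ℝ) : Fin d → ℝ :=
  fun i => v (Tuple.sort v i.rev)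

/-- The Group OWL penalty `J_λ(B) = Σᵢ λᵢ ‖B_{[i],:}‖₂`, pairing the non-increasing weights
`λ` with the non-increasing rearrangement of the Euclidean row norms of `B`. -/
noncomputable def groupOWL {d q : ℕ} (lam : Fin d → ℝ) (B : Matrix (Fin d) (Fin q) ℝ) : ℝ :=
  ∑ i, lam i * sortDesc (fun r => vnorm (B r)) i

/- ### Auxiliary lemmas -/

lemma vnorm_nonneg {m : ℕ} (v : Fin m → ℝ) : 0 ≤ vnorm v := Real.sqrt_nonneg _

lemma vnorm_eq {m : ℕ} (v : Fin m → ℝ) :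
    vnorm v = ‖(WithLp.equiv 2 (Fin m → ℝ)).symm v‖ := by
  rw [EuclideanSpace.norm_eq]
  simp [vnorm, Real.norm_eq_abs, sq_abs]

lemma vnorm_add_le {m : ℕ} (u v : Fin m → ℝ) : vnorm (u + v) ≤ vnorm u + vnorm v := by
  rw [vnorm_eq, vnorm_eq, vnorm_eq]
  exact norm_add_le ((WithLp.equiv 2 (Fin m → ℝ)).symm u) ((WithLp.equiv 2 (Fin m → ℝ)).symm v)

lemma vnorm_smul {m : ℕ} (c : ℝ) (v : Fin m → ℝ) : vnorm (c • v) = |c| * vnorm v := by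
  rw [vnorm_eq, vnorm_eq]
  have : (WithLp.equiv 2 (Fin m → ℝ)).symm (c • v)
      = c • (WithLp.equiv 2 (Fin m → ℝ)).symm v := rfl
  rw [this, norm_smul, Real.norm_eq_abs]

lemma vnorm_eq_zero {m : ℕ} (v : Fin m → ℝ) : vnorm v = 0 ↔ v = 0 := by
  rw [vnorm_eq, norm_eq_zero]
  exact ⟨fun h => congrArg (WithLp.equiv 2 (Fin m → ℝ)) h, fun h => by rw [h]; rfl⟩

/-- The permutation realizing `sortDesc v` as a rearrangement of `v`. -/
noncomputable def descPerm {d : ℕ} (v : Fin d → ℝ) : Equiv.Perm (Fin d) :=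
  (Fin.revPerm).trans (Tuple.sort v)

lemma sortDesc_eq_comp {d : ℕ} (v : Fin d → ℝ) :
    sortDesc v = v ∘ (descPerm v) := rfl

lemma sortDesc_antitone {d : ℕ} (v : Fin d → ℝ) : Antitone (sortDesc v) := by
  intro i j hij
  exact Tuple.monotone_sort v (by simpa [Fin.rev_le_rev] using hij)

lemma sortDesc_nonneg {d : ℕ} (v : Fin d → ℝ) (hv : ∀ i, 0 ≤ v i) (i : Fin d) :
    0 ≤ sortDesc v i := hv _

/-- Rearrangement inequality: any rearrangement of `v` paired with the non-increasing `lam`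
is at most the sorted pairing. -/
lemma key {d : ℕ} (lam : Fin d → ℝ) (hmono : ∀ i j : Fin d, i ≤ j → lam j ≤ lam i)
    (v : Fin d → ℝ) (π : Equiv.Perm (Fin d)) :
    ∑ i, lam i * v (π i) ≤ ∑ i, lam i * sortDesc v i := by
  have hlam : Antitone lam := fun i j h => hmono i j h
  have hmv : Monovary lam (sortDesc v) := hlam.monovary (sortDesc_antitone v)
  have h := hmv.sum_smul_comp_perm_le_sum_smul (σ := π.trans (descPerm v).symm)
  have hv : ∀ i, v (π i) = sortDesc v ((π.trans (descPerm v).symm) i) := by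
    intro i
    simp [sortDesc_eq_comp, Function.comp]
  calc ∑ i, lam i * v (π i)
      = ∑ i, lam i • sortDesc v ((π.trans (descPerm v).symm) i) := by
        simp only [smul_eq_mul]; exact Finset.sum_congr rfl fun i _ => by rw [hv i]
    _ ≤ ∑ i, lam i • sortDesc v i := h
    _ = ∑ i, lam i * sortDesc v i := by simp [smul_eq_mul]

lemma groupOWL_eq {d q : ℕ} (lam : Fin d → ℝ) (B : Matrix (Fin d) (Fin q) ℝ) :
    groupOWL lam B = ∑ i, lam i * vnorm (B (descPerm (fun r => vnorm (B r)) i)) := rfl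

/-- With `λ₁ > 0` and `λ` non-increasing and nonnegative, `J_λ` is a norm on
`ℝ^{d×q}`: nonnegative, absolutely homogeneous, subadditive, and definite. -/
theorem groupOWL_is_norm {d q : ℕ} (hd : 0 < d)
    (lam : Fin d → ℝ) (hmono : ∀ i j : Fin d, i ≤ j → lam j ≤ lam i)
    (hnn : ∀ i, 0 ≤ lam i) (hpos : 0 < lam ⟨0, hd⟩) :
    (∀ B : Matrix (Fin d) (Fin q) ℝ, 0 ≤ groupOWL lam B) ∧
    (∀ (c : ℝ) (B : Matrix (Fin d) (Fin q) ℝ), groupOWL lam (c • B) = |c| * groupOWL lam B) ∧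
    (∀ A B : Matrix (Fin d) (Fin q) ℝ,
      groupOWL lam (A + B) ≤ groupOWL lam A + groupOWL lam B) ∧
    (∀ B : Matrix (Fin d) (Fin q) ℝ, groupOWL lam B = 0 ↔ B = 0) := by
  have hterm : ∀ (B : Matrix (Fin d) (Fin q) ℝ) (i : Fin d),
      0 ≤ lam i * sortDesc (fun r => vnorm (B r)) i := fun B i =>
    mul_nonneg (hnn i) (sortDesc_nonneg _ (fun r => vnorm_nonneg _) i)
  have hnonneg : ∀ B : Matrix (Fin d) (Fin q) ℝ, 0 ≤ groupOWL lam B := fun B =>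
    Finset.sum_nonneg fun i _ => hterm B i
  -- row of smul / add
  have hsmul_row : ∀ (c : ℝ) (B : Matrix (Fin d) (Fin q) ℝ) (r : Fin d),
      vnorm ((c • B) r) = |c| * vnorm (B r) := by
    intro c B r
    have : (c • B) r = c • (B r) := rfl
    rw [this, vnorm_smul]
  -- key upper bound: for any matrix, groupOWL is ≤ sorted pairing but also any perm pairing ≤ it
  have hle : ∀ (B : Matrix (Fin d) (Fin q) ℝ) (π : Equiv.Perm (Fin d)),
      ∑ i, lam i * vnorm (B (π i)) ≤ groupOWL lam B := fun B π =>
    key lam hmono (fun r => vnorm (B r)) π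
  refine ⟨hnonneg, ?_, ?_, ?_⟩
  · -- homogeneity
    intro c B
    rcases eq_or_ne c 0 with rfl | hc
    · simp only [abs_zero, zero_mul]
      have : ∀ r, vnorm (((0:ℝ) • B) r) = 0 := by
        intro r
        rw [hsmul_row]; simp
      have h0 : groupOWL lam ((0:ℝ) • B) = ∑ i : Fin d, lam i * 0 := by
        unfold groupOWL sortDesc
        exact Finset.sum_congr rfl fun i _ => by simp only [this]
      simpa using h0
    · have habs : 0 < |c| := abs_pos.mpr hc
      apply le_antisymm
      · -- groupOWL (c•B) ≤ |c| * groupOWL B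
        rw [groupOWL_eq lam (c • B)]
        set π := descPerm (fun r => vnorm ((c • B) r))
        calc ∑ i, lam i * vnorm ((c • B) (π i))
            = ∑ i, lam i * (|c| * vnorm (B (π i))) := by
              exact Finset.sum_congr rfl fun i _ => by rw [hsmul_row]
          _ = |c| * ∑ i, lam i * vnorm (B (π i)) := by
              rw [Finset.mul_sum]; exact Finset.sum_congr rfl fun i _ => by ring
          _ ≤ |c| * groupOWL lam B := by
              exact mul_le_mul_of_nonneg_left (hle B π) habs.le
      · -- |c| * groupOWL B ≤ groupOWL (c•B)
        rw [groupOWL_eq lam B]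
        set π := descPerm (fun r => vnorm (B r))
        calc |c| * ∑ i, lam i * vnorm (B (π i))
            = ∑ i, lam i * vnorm ((c • B) (π i)) := by
              rw [Finset.mul_sum]
              exact Finset.sum_congr rfl fun i _ => by rw [hsmul_row]; ring
          _ ≤ groupOWL lam (c • B) := hle (c • B) π
  · -- triangle inequality
    intro A B
    rw [groupOWL_eq lam (A + B)]
    set π := descPerm (fun r => vnorm ((A + B) r))
    have hrow : ∀ r, vnorm ((A + B) r) ≤ vnorm (A r) + vnorm (B r) := by
      intro r
      have : (A + B) r = A r + B r := rfl
      rw [this]; exact vnorm_add_le _ _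
    calc ∑ i, lam i * vnorm ((A + B) (π i))
        ≤ ∑ i, (lam i * vnorm (A (π i)) + lam i * vnorm (B (π i))) := by
          refine Finset.sum_le_sum fun i _ => ?_
          rw [← mul_add]
          exact mul_le_mul_of_nonneg_left (hrow (π i)) (hnn i)
      _ = (∑ i, lam i * vnorm (A (π i))) + ∑ i, lam i * vnorm (B (π i)) :=
          Finset.sum_add_distrib
      _ ≤ groupOWL lam A + groupOWL lam B := add_le_add (hle A π) (hle B π)
  · -- definiteness
    intro B
    constructor
    · intro h0
      set v : Fin d → ℝ := fun r => vnorm (B r) with hv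
      have hall : ∀ i ∈ Finset.univ, lam i * sortDesc v i = 0 := by
        rw [← Finset.sum_eq_zero_iff_of_nonneg (fun i _ => hterm B i)]
        exact h0
      have h00 : sortDesc v ⟨0, hd⟩ = 0 := by
        have := hall ⟨0, hd⟩ (Finset.mem_univ _)
        rcases mul_eq_zero.mp this with h | h
        · exact absurd h (ne_of_gt hpos)
        · exact h
      have hsorted0 : ∀ i, sortDesc v i = 0 := by
        intro i
        have h1 : sortDesc v i ≤ 0 := h00 ▸ sortDesc_antitone v (Fin.mk_le_of_le_val (Nat.zero_le _))
        exact le_antisymm h1 (sortDesc_nonneg v (fun r => vnorm_nonneg _) i)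
      have hv0 : ∀ r, v r = 0 := by
        intro r
        have := hsorted0 ((descPerm v).symm r)
        rw [sortDesc_eq_comp] at this
        simpa using this
      funext r j
      have : B r = 0 := (vnorm_eq_zero (B r)).mp (hv0 r)
      have := congrFun this j
      simpa using this
    · intro h0
      subst h0
      have : ∀ r : Fin d, vnorm ((0 : Matrix (Fin d) (Fin q) ℝ) r) = 0 := by
        intro r
        have : (0 : Matrix (Fin d) (Fin q) ℝ) r = 0 := rfl
        rw [this, (vnorm_eq_zero _).mpr rfl]
      unfold groupOWL sortDesc
      apply Finset.sum_eq_zero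
      intro i _
      simp only [this, mul_zero]
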